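/- arXiv:1708.01890 — 3 statements merged into one kernel-verified Lean document; each statement's English description precedes it below -/
import Mathlib

section
/- Let ĉ > 0 and let the payoffs satisfy u00 = u11, u00 > u10, u11 > u01 and payoff symmetry u01 = u10. Suppose π̲, π̄ ∈ (0,1) with π̲ ≤ π̄ satisfy the indifference condition π̲·u11 + (1−π̲)·u10 = π̄·u01 + (1−π̄)·u00, and let (r^R, r^l) ∈ (0,1)² be the unique pair with l(r^R) = l(π̲) + (u11 − u10)/ĉ and l(r^l) = l(π̄) − (u00 − u01)/ĉ. Then π̲ + π̄ = 1 and r^l + r^R = 1. -/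
/-- `l(r) = 2·log(r/(1−r)) − 1/r + 1/(1−r)`. -/
noncomputable def l (r : ℝ) : ℝ := 2 * Real.log (r / (1 - r)) - 1 / r + 1 / (1 - r)

/-!
Under payoff symmetry the indifference condition reads `(π̲ + π̄ − 1)(u11 − u10) = 0`, so
`π̄ = 1 − π̲`. Since `l (1 − r) = −l r`, the equation defining `r^l` then becomes the equation
defining `r^R` reflected through `1/2`, and strict monotonicity of `l` on `(0, 1)` gives
`r^l = 1 − r^R`.
-/

open Set Real

lemma l_one_sub (r : ℝ) : l (1 - r) = -l r := by
  have hratio : (1 - r) / (1 - (1 - r)) = (r / (1 - r))⁻¹ := by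
    rw [inv_div, sub_sub_cancel]
  rw [l, l, hratio, log_inv]
  ring

lemma strictMonoOn_l : StrictMonoOn l (Ioo 0 1) := by
  intro a ⟨ha0, ha1⟩ b ⟨hb0, hb1⟩ hab
  have hlog : log (a / (1 - a)) < log (b / (1 - b)) := by
    apply log_lt_log (div_pos ha0 (sub_pos.2 ha1))
    gcongr
  have hinv : 1 / b < 1 / a := one_div_lt_one_div_of_lt ha0 hab
  have hinv_sub : 1 / (1 - a) < 1 / (1 - b) :=
    one_div_lt_one_div_of_lt (sub_pos.2 hb1) (by linarith)
  simp only [l]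
  linarith

theorem stmt_4_general (chat u00 u01 u10 u11 πlo πhi rR rl : ℝ)
    (huu : u00 = u11) (h11 : u01 < u11)
    (hsym : u01 = u10)
    (hind : πlo * u11 + (1 - πlo) * u10 = πhi * u01 + (1 - πhi) * u00)
    (hrR : rR ∈ Set.Ioo (0 : ℝ) 1) (hrl : rl ∈ Set.Ioo (0 : ℝ) 1)
    (heqR : l rR = l πlo + (u11 - u10) / chat)
    (heql : l rl = l πhi - (u00 - u01) / chat) :
    πlo + πhi = 1 ∧ rl + rR = 1 := by
  subst huu hsym
  have hπ : πlo + πhi = 1 := by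
    have hprod : (πlo + πhi - 1) * (u00 - u01) = 0 := by linarith
    rcases mul_eq_zero.1 hprod with h | h <;> linarith
  refine ⟨hπ, ?_⟩
  have hl : l rl = l (1 - rR) := by
    rw [l_one_sub, heqR, heql, show πhi = 1 - πlo by linarith, l_one_sub]
    ring
  have hrR' : 1 - rR ∈ Ioo (0 : ℝ) 1 := ⟨by linarith [hrR.2], by linarith [hrR.1]⟩
  linarith [strictMonoOn_l.injOn hrl hrR' hl]

theorem stmt_4 (chat u00 u01 u10 u11 πlo πhi rR rl : ℝ)
    (hc : 0 < chat)
    (huu : u00 = u11) (h00 : u10 < u00) (h11 : u01 < u11)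
    (hsym : u01 = u10)
    (hπlo : πlo ∈ Set.Ioo (0 : ℝ) 1) (hπhi : πhi ∈ Set.Ioo (0 : ℝ) 1)
    (hle : πlo ≤ πhi)
    (hind : πlo * u11 + (1 - πlo) * u10 = πhi * u01 + (1 - πhi) * u00)
    (hrR : rR ∈ Set.Ioo (0 : ℝ) 1) (hrl : rl ∈ Set.Ioo (0 : ℝ) 1)
    (heqR : l rR = l πlo + (u11 - u10) / chat)
    (heql : l rl = l πhi - (u00 - u01) / chat) :
    πlo + πhi = 1 ∧ rl + rR = 1 :=
  stmt_4_general chat u00 u01 u10 u11 πlo πhi rR rl huu h11 hsym hind hrR hrl heqR heql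
end

section
/- Let 0 < α < 1/2, 0 < ε < 1, σ > 0, and define φ(z) = exp(2αz/σ²), m̲(z) = (1−ε)·φ(z)/((1+ε) + (1−ε)·φ(z)), m̄(z) = (1+ε)·φ(z)/((1−ε) + (1+ε)·φ(z)), and X(z) = max{(1/2 − α) + 2α·m̲(z), (1/2 + α) − 2α·m̄(z), 1/2}. Set z* = (σ²/(2α))·log((1+ε)/(1−ε)). Then for every z ∈ ℝ: X(z) = (1/2 + α) − 2α/(1 + ((1−ε)/(1+ε))·φ(z)) if z > z*; X(z) = (1/2 − α) + 2α/(1 + ((1+ε)/(1−ε))·φ(z)) if z < −z*; and X(z) = 1/2 if −z* ≤ z ≤ z*. -/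
/-!
Write `a = 1 - ε`, `b = 1 + ε` for the extreme prior weights of the positive bias and
`p = φ(z)` for the likelihood ratio of the signal. The red bet pays
`1/2 + α (a p - b) / (b + a p)` and the blue bet `1/2 + α (a - b p) / (a + b p)`, so red beats
the risky urn iff `b < a p` and blue iff `b p < a`. As `a < b`, at most one of the two happens,
and taking logarithms turns the conditions into `z > z*` and `z < -z*`.
-/

open Real

noncomputable def redBet (α a b p : ℝ) : ℝ := (1 / 2 - α) + 2 * α * (a * p / (b + a * p))

noncomputable def blueBet (α a b p : ℝ) : ℝ := (1 / 2 + α) - 2 * α * (b * p / (a + b * p))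

section Bets

variable {α a b p : ℝ}

lemma redBet_eq (hb : b ≠ 0) (hd : b + a * p ≠ 0) :
    redBet α a b p = (1 / 2 + α) - 2 * α / (1 + (a / b) * p) := by
  have : 1 + a / b * p ≠ 0 := by rw [div_mul_eq_mul_div, one_add_div hb]; exact div_ne_zero hd hb
  unfold redBet
  field_simp
  ring

lemma blueBet_eq (ha : a ≠ 0) (hd : a + b * p ≠ 0) :
    blueBet α a b p = (1 / 2 - α) + 2 * α / (1 + (b / a) * p) := by
  have : 1 + b / a * p ≠ 0 := by rw [div_mul_eq_mul_div, one_add_div ha]; exact div_ne_zero hd ha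
  unfold blueBet
  field_simp
  ring

lemma redBet_le_half_iff (hα : 0 < α) (hd : 0 < b + a * p) :
    redBet α a b p ≤ 1 / 2 ↔ a * p ≤ b := by
  have : redBet α a b p = 1 / 2 + α * (a * p - b) / (b + a * p) := by
    unfold redBet; field_simp; ring
  rw [this, add_le_iff_nonpos_right, div_le_iff₀ hd, zero_mul, mul_nonpos_iff_pos_imp_nonpos,
    sub_nonpos]
  simp [hα, hα.le]

lemma blueBet_le_half_iff (hα : 0 < α) (hd : 0 < a + b * p) :
    blueBet α a b p ≤ 1 / 2 ↔ a ≤ b * p := by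
  have : blueBet α a b p = 1 / 2 + α * (a - b * p) / (a + b * p) := by
    unfold blueBet; field_simp; ring
  rw [this, add_le_iff_nonpos_right, div_le_iff₀ hd, zero_mul, mul_nonpos_iff_pos_imp_nonpos,
    sub_nonpos]
  simp [hα, hα.le]

variable (ha : 0 < a) (hab : a ≤ b)
include ha hab

lemma max_bets_of_lt_mul (hα : 0 < α) (hp : b < a * p) :
    max (max (redBet α a b p) (blueBet α a b p)) (1 / 2) = redBet α a b p := by
  have hb : 0 < b := ha.trans_le hab
  have hp₀ : 0 < p := pos_of_mul_pos_right (hb.trans hp) ha.le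
  have hred : 1 / 2 ≤ redBet α a b p :=
    (not_le.mp ((redBet_le_half_iff hα (by positivity)).not.mpr hp.not_ge)).le
  have hblue : blueBet α a b p ≤ 1 / 2 :=
    (blueBet_le_half_iff hα (by positivity)).mpr (by nlinarith)
  rw [max_eq_left (hblue.trans hred), max_eq_left hred]

lemma max_bets_of_mul_lt (hα : 0 < α) (hp₀ : 0 < p) (hp : b * p < a) :
    max (max (redBet α a b p) (blueBet α a b p)) (1 / 2) = blueBet α a b p := by
  have hb : 0 < b := ha.trans_le hab
  have hblue : 1 / 2 ≤ blueBet α a b p :=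
    (not_le.mp ((blueBet_le_half_iff hα (by positivity)).not.mpr hp.not_ge)).le
  have hred : redBet α a b p ≤ 1 / 2 :=
    (redBet_le_half_iff hα (by positivity)).mpr (by nlinarith)
  rw [max_eq_right (hred.trans hblue), max_eq_left hblue]

lemma max_bets_of_le_of_le (hα : 0 < α) (hlo : a ≤ b * p) (hhi : a * p ≤ b) :
    max (max (redBet α a b p) (blueBet α a b p)) (1 / 2) = 1 / 2 := by
  have hb : 0 < b := ha.trans_le hab
  have hp₀ : 0 < p := pos_of_mul_pos_right (ha.trans_le hlo) hb.le
  exact max_eq_right (max_le ((redBet_le_half_iff hα (by positivity)).mpr hhi)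
    ((blueBet_le_half_iff hα (by positivity)).mpr hlo))

end Bets

section Threshold

variable {κ a b z : ℝ}

lemma log_div_div_lt_iff (hκ : 0 < κ) (ha : 0 < a) (hb : 0 < b) :
    log (b / a) / κ < z ↔ b < a * exp (κ * z) := by
  rw [div_lt_iff₀ hκ, mul_comm z, log_lt_iff_lt_exp (by positivity), div_lt_iff₀' ha]

lemma lt_neg_log_div_div_iff (hκ : 0 < κ) (ha : 0 < a) (hb : 0 < b) :
    z < -(log (b / a) / κ) ↔ b * exp (κ * z) < a := by
  rw [← neg_div, ← log_inv, inv_div, lt_div_iff₀ hκ, mul_comm,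
    lt_log_iff_exp_lt (by positivity), lt_div_iff₀' hb]

end Threshold

theorem stmt_17_general (α ε σ : ℝ) (φ mlo mhi X : ℝ → ℝ)
    (hα : 0 < α) (hε : 0 < ε) (hε' : ε < 1) (hσ : 0 < σ)
    (hφ : ∀ z, φ z = Real.exp (2 * α * z / σ ^ 2))
    (hmlo : ∀ z, mlo z = (1 - ε) * φ z / ((1 + ε) + (1 - ε) * φ z))
    (hmhi : ∀ z, mhi z = (1 + ε) * φ z / ((1 - ε) + (1 + ε) * φ z))
    (hX : ∀ z, X z =
      max (max ((1 / 2 - α) + 2 * α * mlo z) ((1 / 2 + α) - 2 * α * mhi z))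
        (1 / 2)) :
    let zstar := (σ ^ 2 / (2 * α)) * Real.log ((1 + ε) / (1 - ε))
    ∀ z : ℝ,
      (z > zstar → X z = (1 / 2 + α) - 2 * α / (1 + ((1 - ε) / (1 + ε)) * φ z)) ∧
      (z < -zstar → X z = (1 / 2 - α) + 2 * α / (1 + ((1 + ε) / (1 - ε)) * φ z)) ∧
      (-zstar ≤ z → z ≤ zstar → X z = 1 / 2) := by
  intro zstar z
  have ha : 0 < 1 - ε := by linarith
  have hb : 0 < 1 + ε := by linarith
  have hab : 1 - ε ≤ 1 + ε := by linarith
  have hκ : 0 < 2 * α / σ ^ 2 := by positivity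
  have hzstar : zstar = log ((1 + ε) / (1 - ε)) / (2 * α / σ ^ 2) := by
    simp only [zstar]; field_simp
  have hφz : φ z = exp (2 * α / σ ^ 2 * z) := by rw [hφ]; ring_nf
  have hp₀ : 0 < φ z := hφz ▸ exp_pos _
  have hXz : X z = max (max (redBet α (1 - ε) (1 + ε) (φ z))
      (blueBet α (1 - ε) (1 + ε) (φ z))) (1 / 2) := by rw [hX, hmlo, hmhi]; rfl
  have above := log_div_div_lt_iff (z := z) hκ ha hb
  have below := lt_neg_log_div_div_iff (z := z) hκ ha hb
  rw [← hzstar, ← hφz] at above below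
  refine ⟨fun hz => ?_, fun hz => ?_, fun hlo hhi => ?_⟩
  · rw [hXz, max_bets_of_lt_mul ha hab hα (above.mp hz), redBet_eq hb.ne' (by positivity)]
  · rw [hXz, max_bets_of_mul_lt ha hab hα hp₀ (below.mp hz), blueBet_eq ha.ne' (by positivity)]
  · rw [hXz, max_bets_of_le_of_le ha hab hα (not_lt.mp (below.not.mp hlo.not_gt))
      (not_lt.mp (above.not.mp hhi.not_gt))]

theorem stmt_17 (α ε σ : ℝ) (φ mlo mhi X : ℝ → ℝ)
    (hα : 0 < α) (hα' : α < 1 / 2) (hε : 0 < ε) (hε' : ε < 1) (hσ : 0 < σ)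
    (hφ : ∀ z, φ z = Real.exp (2 * α * z / σ ^ 2))
    (hmlo : ∀ z, mlo z = (1 - ε) * φ z / ((1 + ε) + (1 - ε) * φ z))
    (hmhi : ∀ z, mhi z = (1 + ε) * φ z / ((1 - ε) + (1 + ε) * φ z))
    (hX : ∀ z, X z =
      max (max ((1 / 2 - α) + 2 * α * mlo z) ((1 / 2 + α) - 2 * α * mhi z))
        (1 / 2)) :
    let zstar := (σ ^ 2 / (2 * α)) * Real.log ((1 + ε) / (1 - ε))
    ∀ z : ℝ,
      (z > zstar → X z = (1 / 2 + α) - 2 * α / (1 + ((1 - ε) / (1 + ε)) * φ z)) ∧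
      (z < -zstar → X z = (1 / 2 - α) + 2 * α / (1 + ((1 + ε) / (1 - ε)) * φ z)) ∧
      (-zstar ≤ z → z ≤ zstar → X z = 1 / 2) :=
  stmt_17_general α ε σ φ mlo mhi X hα hε hε' hσ hφ hmlo hmhi hX
end

section
/- Let b > 0, ĉ > 0 and π̲ ∈ (0, 1/2). Let r̃^R ∈ (0,1) be the unique solution of l(r̃^R) = l(π̲) + b/ĉ, and set r̃^l = 1 − r̃^R; let r̃_B^R ∈ (1/2, 1) be the unique solution of l(r̃_B^R) = b/ĉ, and set r̃_B^l = 1 − r̃_B^R. Then r̃_B^l < r̃^l and r̃^R < r̃_B^R. (This is the comparison, in the payoff-symmetric sequential testing problem with a = b, between the continuation thresholds of the ambiguity-averse decision-maker with lower prior π̲ < 1/2 for H₁ and those of a Bayesian: the robust continuation region is strictly contained in the Bayesian one.) -/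
theorem l_strictMonoOn : StrictMonoOn l (Set.Ioo 0 1) := by
  rintro x ⟨hx0, hx1⟩ y ⟨-, hy1⟩ hxy
  have hx1' : 0 < 1 - x := by linarith
  have hy1' : 0 < 1 - y := by linarith
  have hodds : x / (1 - x) < y / (1 - y) := by
    rw [div_lt_div_iff₀ hx1' hy1']; nlinarith
  have hlog : Real.log (x / (1 - x)) < Real.log (y / (1 - y)) :=
    Real.log_lt_log (div_pos hx0 hx1') hodds
  have hinv : 1 / y < 1 / x := one_div_lt_one_div_of_lt hx0 hxy
  have hinv' : 1 / (1 - x) < 1 / (1 - y) := one_div_lt_one_div_of_lt hy1' (by linarith)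
  unfold l
  linarith

theorem l_one_half : l (1 / 2) = 0 := by
  norm_num [l]

theorem l_neg_of_lt_one_half {x : ℝ} (hx : x ∈ Set.Ioo (0 : ℝ) (1 / 2)) : l x < 0 :=
  l_one_half ▸ l_strictMonoOn ⟨hx.1, by linarith [hx.2]⟩ (by norm_num) hx.2

theorem stmt_19_general (b chat πlo rR rBR : ℝ)
    (hπlo : πlo ∈ Set.Ioo (0 : ℝ) (1 / 2))
    (hrR : rR ∈ Set.Ioo (0 : ℝ) 1)
    (hrR_eq : l rR = l πlo + b / chat)
    (hrBR : rBR ∈ Set.Ioo (1 / 2 : ℝ) 1)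
    (hrBR_eq : l rBR = b / chat) :
    1 - rBR < 1 - rR ∧ rR < rBR := by
  have hl : l rR < l rBR := by
    linarith [l_neg_of_lt_one_half hπlo]
  have hrBR' : rBR ∈ Set.Ioo (0 : ℝ) 1 := ⟨by linarith [hrBR.1], hrBR.2⟩
  have hlt : rR < rBR := (l_strictMonoOn.lt_iff_lt hrR hrBR').mp hl
  exact ⟨by linarith, hlt⟩

theorem stmt_19 (b chat πlo rR rBR : ℝ)
    (hb : 0 < b) (hc : 0 < chat)
    (hπlo : πlo ∈ Set.Ioo (0 : ℝ) (1 / 2))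
    (hrR : rR ∈ Set.Ioo (0 : ℝ) 1)
    (hrR_eq : l rR = l πlo + b / chat)
    (hrBR : rBR ∈ Set.Ioo (1 / 2 : ℝ) 1)
    (hrBR_eq : l rBR = b / chat) :
    1 - rBR < 1 - rR ∧ rR < rBR :=
  stmt_19_general b chat πlo rR rBR hπlo hrR hrR_eq hrBR hrBR_eq
end
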